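/- arXiv:1301.4093 — 4 statements merged into one kernel-verified Lean document; each statement's English description precedes it below -/
import Mathlib

section
/- Let A be a group of automorphisms of a finite group G with gcd(|A|,|G|) = 1. Suppose B is a normal subset of A generating A, and k ≥ 1. Then the commutator subgroup [G, A] is generated by the subgroups [G, b_1, ..., b_k] for b_1, ..., b_k ∈ B. -/
/-! If `b` is an automorphism whose order is prime to `|G|`, every coset of the `b`-invariant
subgroup `[G, b]` contains a fixed point of `b`: for a `p`-power part of `b` this is the
fixed-point theorem for `p`-groups acting on a set of size prime to `p`, and commuting parts of
coprime orders are handled one after the other, the second inside the fixed points of the first.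
So `G = [G, b] C_G(b)`, whence `[G, b, b] = [G, b]` and `[G, b] = [G, b, …, b]` lies in the join
`M` of all `[G, b₁, …, b_k]`. The automorphisms `a` with `[G, a] ≤ M` form a subgroup, which
then contains `⟨B⟩ = A`, so `[G, A] ≤ M`; conversely `[S, b] ≤ [G, b] ≤ [G, A]`. -/

/-- `commStep S b` is the subgroup `[S, b]` generated by the commutators
`g⁻¹ · b(g)` for `g ∈ S`, where `b` is an automorphism. -/
def commStep {G : Type} [Group G] (S : Subgroup G) (b : MulAut G) : Subgroup G :=
  Subgroup.closure {x : G | ∃ g ∈ S, x = g⁻¹ * b g}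

theorem Subgroup.mem_of_pow_mem_of_coprime {M : Type*} [Group M] {H : Subgroup M} {g : M}
    {m n : ℕ} (hmn : m.Coprime n) (hm : g ^ m ∈ H) (hn : g ^ n ∈ H) : g ∈ H := by
  have hbezout : g = (g ^ m) ^ m.gcdA n * (g ^ n) ^ m.gcdB n := by
    rw [← zpow_natCast, ← zpow_natCast, ← zpow_mul, ← zpow_mul, ← zpow_add, ← Nat.gcd_eq_gcd_ab,
      hmn.gcd_eq_one, Nat.cast_one, zpow_one]
  rw [hbezout]
  exact H.mul_mem (H.zpow_mem hm _) (H.zpow_mem hn _)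

theorem Subgroup.pow_card_eq_one_of_mem {M : Type*} [Group M] {H : Subgroup M} {g : M}
    (hg : g ∈ H) : g ^ Nat.card H = 1 := by
  have h := congrArg H.subtype (pow_card_eq_one' (x := (⟨g, hg⟩ : H)))
  rwa [map_pow, map_one] at h

namespace CoprimeAction

section CosetStabilizer

variable {G : Type*} [Group G]

def cosetStabilizer (K : Subgroup G) (x : G) : Subgroup (MulAut G) where
  carrier := {w | (∀ g, w g ∈ K ↔ g ∈ K) ∧ x⁻¹ * w x ∈ K}
  one_mem' := ⟨fun _ => Iff.rfl, by simp⟩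
  mul_mem' := by
    rintro w w' ⟨hwK, hwx⟩ ⟨hw'K, hw'x⟩
    refine ⟨fun g => (hwK _).trans (hw'K g), ?_⟩
    have h : x⁻¹ * (w * w') x = (x⁻¹ * w x) * w (x⁻¹ * w' x) := by
      simp only [MulAut.mul_apply, map_mul, map_inv]
      group
    rw [h]
    exact K.mul_mem hwx ((hwK _).2 hw'x)
  inv_mem' := by
    rintro w ⟨hwK, hwx⟩
    have hw'K : ∀ g, w⁻¹ g ∈ K ↔ g ∈ K := fun g => by
      simpa only [MulAut.apply_inv_self] using (hwK (w⁻¹ g)).symm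
    refine ⟨hw'K, ?_⟩
    have h : x⁻¹ * w⁻¹ x = (w⁻¹ (x⁻¹ * w x))⁻¹ := by
      simp only [map_mul, map_inv, MulAut.inv_apply_self, mul_inv_rev, inv_inv]
    rw [h]
    exact K.inv_mem ((hw'K _).2 hwx)

variable {K : Subgroup G} {x : G}

theorem inv_mul_apply_mem_of_mem_cosetStabilizer {w : MulAut G} (hw : w ∈ cosetStabilizer K x)
    {g : G} (hg : x⁻¹ * g ∈ K) : x⁻¹ * w g ∈ K := by
  have h : x⁻¹ * w g = (x⁻¹ * w x) * w (x⁻¹ * g) := by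
    simp only [map_mul, map_inv]
    group
  rw [h]
  exact K.mul_mem hw.2 ((hw.1 _).2 hg)

theorem cosetStabilizer_le_of_inv_mul_mem {x' : G} (h : x⁻¹ * x' ∈ K) :
    cosetStabilizer K x ≤ cosetStabilizer K x' := by
  intro w hw
  refine ⟨hw.1, ?_⟩
  have h' : x'⁻¹ * w x' = (x⁻¹ * x')⁻¹ * (x⁻¹ * w x') := by group
  rw [h']
  exact K.mul_mem (K.inv_mem h) (inv_mul_apply_mem_of_mem_cosetStabilizer hw h)

theorem _root_.IsPGroup.exists_fixed_mem_coset {p : ℕ} [Fact p.Prime] {P : Subgroup (MulAut G)}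
    (hP : IsPGroup p P) (hPK : P ≤ cosetStabilizer K x) (hp : ¬p ∣ Nat.card K) :
    ∃ y, x⁻¹ * y ∈ K ∧ ∀ w ∈ P, w y = y := by
  let coset : SubMulAction P G :=
    { carrier := {g | x⁻¹ * g ∈ K}
      smul_mem' := fun w _ hg => inv_mul_apply_mem_of_mem_cosetStabilizer (hPK w.2) hg }
  have hcard : Nat.card coset = Nat.card K :=
    Nat.card_congr ((Equiv.mulLeft x⁻¹).subtypeEquiv fun _ => Iff.rfl)
  obtain ⟨y, hy⟩ := hP.nonempty_fixed_point_of_prime_not_dvd_card coset (hcard ▸ hp)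
  exact ⟨y, y.2, fun w hw => congrArg Subtype.val (hy ⟨w, hw⟩)⟩

theorem mem_cosetStabilizer_inf_eqLocus {u v : MulAut G} {y : G} (huv : Commute u v)
    (hv : v ∈ cosetStabilizer K y) (hu : u y = y) :
    v ∈ cosetStabilizer (K ⊓ (u : G →* G).eqLocus (MonoidHom.id G)) y := by
  have hcomm : ∀ g, u (v g) = v (u g) := fun g => congrArg (· g) huv.eq
  refine ⟨fun g => and_congr (hv.1 g) ?_, hv.2, ?_⟩
  · change u (v g) = v g ↔ u g = g
    rw [hcomm, v.injective.eq_iff]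
  · change u (y⁻¹ * v y) = y⁻¹ * v y
    rw [map_mul, map_inv, hcomm, hu]

theorem exists_fixed_mem_coset_of_pow_eq_one (n : ℕ) :
    ∀ {b : MulAut G} {K : Subgroup G} {x : G}, b ^ n = 1 → n.Coprime (Nat.card K) →
      b ∈ cosetStabilizer K x → ∃ y, x⁻¹ * y ∈ K ∧ b y = y := by
  induction n using Nat.recOnPosPrimePosCoprime with
  | zero =>
    intro b K x _ hK hb
    rw [Nat.coprime_zero_left, Subgroup.card_eq_one] at hK
    subst hK
    exact ⟨x, by simp, (inv_mul_eq_one.1 (Subgroup.mem_bot.1 hb.2)).symm⟩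
  | one =>
    intro b K x hb _ _
    rw [pow_one] at hb
    exact ⟨x, by simp, by rw [hb, MulAut.one_apply]⟩
  | prime_pow p m hp hm =>
    intro b K x hb hK hbK
    have := Fact.mk hp
    have hP : IsPGroup p (Subgroup.zpowers b) := IsPGroup.of_card_dvd_pow <| by
      rw [Nat.card_zpowers]
      exact orderOf_dvd_of_pow_eq_one hb
    have hpK : ¬p ∣ Nat.card K :=
      hp.coprime_iff_not_dvd.1 (hK.coprime_dvd_left (dvd_pow_self p hm.ne'))
    obtain ⟨y, hy, hfix⟩ := hP.exists_fixed_mem_coset (Subgroup.zpowers_le.2 hbK) hpK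
    exact ⟨y, hy, hfix b (Subgroup.mem_zpowers b)⟩
  | coprime s t _ _ hst ihs iht =>
    intro b K x hb hK hbK
    set u := b ^ t
    set v := b ^ s
    have hu : u ^ s = 1 := by rw [← pow_mul, mul_comm, hb]
    have hv : v ^ t = 1 := by rw [← pow_mul, hb]
    obtain ⟨y₁, hy₁, hu₁⟩ := ihs hu hK.coprime_mul_right (pow_mem hbK t)
    have hvK₁ := mem_cosetStabilizer_inf_eqLocus (Commute.pow_pow_self b t s)
      (cosetStabilizer_le_of_inv_mul_mem hy₁ (pow_mem hbK s)) hu₁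
    obtain ⟨y, ⟨hyK, hyu⟩, hv₁⟩ := iht hv
      (hK.coprime_mul_left.coprime_dvd_right (Subgroup.card_dvd_of_le inf_le_left)) hvK₁
    have huy : u y = y := by
      have hy : y = y₁ * (y₁⁻¹ * y) := by group
      rw [hy, map_mul, hu₁]
      exact congrArg (y₁ * ·) hyu
    refine ⟨y, by simpa using K.mul_mem hy₁ hyK, ?_⟩
    exact Subgroup.mem_of_pow_mem_of_coprime (H := MulAction.stabilizer (MulAut G) y) hst.symm
      huy hv₁

end CosetStabilizer

variable {G : Type} [Group G] {K : Subgroup G}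

theorem inv_mul_apply_mem_commStep_top (b : MulAut G) (g : G) : g⁻¹ * b g ∈ commStep ⊤ b :=
  Subgroup.subset_closure ⟨g, trivial, rfl⟩

theorem commStep_mono {S T : Subgroup G} (h : S ≤ T) (b : MulAut G) :
    commStep S b ≤ commStep T b :=
  Subgroup.closure_mono fun _ ⟨g, hg, hx⟩ => ⟨g, h hg, hx⟩

theorem mem_cosetStabilizer_of_commStep_top_le {b : MulAut G} (h : commStep ⊤ b ≤ K) (x : G) :
    b ∈ cosetStabilizer K x := by
  have hb : ∀ g, g⁻¹ * b g ∈ K := fun g => h (inv_mul_apply_mem_commStep_top b g)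
  refine ⟨fun g => ?_, hb x⟩
  rw [← mul_inv_cancel_left g (b g)]
  exact K.mul_mem_cancel_right (hb g)

theorem commStep_commStep_top_self {b : MulAut G} {n : ℕ} (hb : b ^ n = 1)
    (hn : n.Coprime (Nat.card G)) : commStep (commStep ⊤ b) b = commStep ⊤ b := by
  refine le_antisymm (commStep_mono le_top b) ((Subgroup.closure_le _).2 ?_)
  rintro _ ⟨g, -, rfl⟩
  obtain ⟨y, hy, hfix⟩ := exists_fixed_mem_coset_of_pow_eq_one n hb
    (hn.coprime_dvd_right (Subgroup.card_subgroup_dvd_card _))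
    (mem_cosetStabilizer_of_commStep_top_le le_rfl g)
  have h : g⁻¹ * b g = (y⁻¹ * g)⁻¹ * b (y⁻¹ * g) := by
    rw [map_mul, map_inv, hfix]
    group
  rw [h]
  exact Subgroup.subset_closure ⟨y⁻¹ * g, by simpa using inv_mem hy, rfl⟩

theorem foldl_commStep_top_replicate {b : MulAut G} {n : ℕ} (hb : b ^ n = 1)
    (hn : n.Coprime (Nat.card G)) (j : ℕ) :
    (List.replicate (j + 1) b).foldl commStep ⊤ = commStep ⊤ b := by
  induction j with
  | zero => rfl
  | succ j ih =>
    rw [List.replicate_succ', List.foldl_append, ih, List.foldl_cons, List.foldl_nil,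
      commStep_commStep_top_self hb hn]

theorem foldl_commStep_le {l : List (MulAut G)} {S T : Subgroup G} (hS : S ≤ T)
    (hl : ∀ b ∈ l, commStep ⊤ b ≤ T) : l.foldl commStep S ≤ T := by
  induction l generalizing S with
  | nil => exact hS
  | cons b l ih =>
    exact ih (le_trans (commStep_mono le_top b) (hl b List.mem_cons_self))
      fun b' hb' => hl b' (List.mem_cons_of_mem b hb')

def commStepLE (M : Subgroup G) : Subgroup (MulAut G) where
  carrier := {a | ∀ g, g⁻¹ * a g ∈ M}
  one_mem' := fun _ => by simp
  mul_mem' := by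
    intro a a' ha ha' g
    have h : g⁻¹ * (a * a') g = (g⁻¹ * a' g) * ((a' g)⁻¹ * a (a' g)) := by
      simp only [MulAut.mul_apply]
      group
    rw [h]
    exact M.mul_mem (ha' g) (ha (a' g))
  inv_mem' := by
    intro a ha g
    have h : g⁻¹ * a⁻¹ g = ((a⁻¹ g)⁻¹ * a (a⁻¹ g))⁻¹ := by
      rw [mul_inv_rev, inv_inv, MulAut.apply_inv_self]
    rw [h]
    exact M.inv_mem (ha (a⁻¹ g))

theorem mem_commStepLE_iff {M : Subgroup G} {a : MulAut G} :
    a ∈ commStepLE M ↔ commStep ⊤ a ≤ M := by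
  refine ⟨fun ha => (Subgroup.closure_le _).2 ?_, fun h g => h (inv_mul_apply_mem_commStep_top a g)⟩
  rintro _ ⟨g, -, rfl⟩
  exact ha g

variable {A : Subgroup (MulAut G)}

theorem commStep_top_le_closure {a : MulAut G} (ha : a ∈ A) :
    commStep ⊤ a ≤ Subgroup.closure {x : G | ∃ g : G, ∃ a ∈ A, x = g⁻¹ * a g} :=
  Subgroup.closure_mono fun _ ⟨g, _, hx⟩ => ⟨g, a, ha, hx⟩

theorem closure_le_of_commStep_top_le {B : Set (MulAut G)} (hgen : Subgroup.closure B = A)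
    {M : Subgroup G} (hB : ∀ b ∈ B, commStep ⊤ b ≤ M) :
    Subgroup.closure {x : G | ∃ g : G, ∃ a ∈ A, x = g⁻¹ * a g} ≤ M := by
  have hA : A ≤ commStepLE M := by
    rw [← hgen, Subgroup.closure_le]
    exact fun b hb => mem_commStepLE_iff.2 (hB b hb)
  rw [Subgroup.closure_le]
  rintro _ ⟨g, a, ha, rfl⟩
  exact hA ha g

end CoprimeAction

open CoprimeAction in
theorem stmt5_general (G : Type) [Group G] (A : Subgroup (MulAut G))
    (B : Set (MulAut G)) (k : ℕ) (hk : 1 ≤ k)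
    (hBA : B ⊆ (A : Set (MulAut G)))
    (hgen : Subgroup.closure B = A)
    (hcop : Nat.Coprime (Nat.card A) (Nat.card G)) :
    Subgroup.closure {x : G | ∃ g : G, ∃ a ∈ A, x = g⁻¹ * a g} =
      ⨆ bs : {f : Fin k → MulAut G // ∀ i, f i ∈ B},
        (List.ofFn bs.1).foldl commStep ⊤ := by
  obtain ⟨k, rfl⟩ : ∃ j, k = j + 1 := ⟨k - 1, by omega⟩
  apply le_antisymm
  · refine closure_le_of_commStep_top_le hgen fun b hb => ?_
    rw [← foldl_commStep_top_replicate (Subgroup.pow_card_eq_one_of_mem (hBA hb)) hcop k,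
      ← List.ofFn_const]
    exact le_iSup_of_le ⟨fun _ => b, fun _ => hb⟩ le_rfl
  · refine iSup_le fun ⟨f, hf⟩ => ?_
    rw [List.ofFn_succ, List.foldl_cons]
    refine foldl_commStep_le (commStep_top_le_closure (hBA (hf 0))) fun b hb => ?_
    obtain ⟨i, rfl⟩ := List.mem_ofFn.1 hb
    exact commStep_top_le_closure (hBA (hf i.succ))

/-- Let `A` be a group of automorphisms of a finite group `G` with
`gcd(|A|, |G|) = 1`, let `B` be a normal generating subset of `A` and `k ≥ 1`.
Then `[G, A]` is generated by the subgroups `[G, b_1, ..., b_k]` with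
`b_1, ..., b_k ∈ B`. -/
theorem stmt5 (G : Type) [Group G] [Finite G] (A : Subgroup (MulAut G))
    (B : Set (MulAut G)) (k : ℕ) (hk : 1 ≤ k)
    (hBA : B ⊆ (A : Set (MulAut G)))
    (hBnormal : ∀ a ∈ A, ∀ b ∈ B, a * b * a⁻¹ ∈ B)
    (hgen : Subgroup.closure B = A)
    (hcop : Nat.Coprime (Nat.card A) (Nat.card G)) :
    Subgroup.closure {x : G | ∃ g : G, ∃ a ∈ A, x = g⁻¹ * a g} =
      ⨆ bs : {f : Fin k → MulAut G // ∀ i, f i ∈ B},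
        (List.ofFn bs.1).foldl commStep ⊤ :=
  stmt5_general G A B k hk hBA hgen hcop
end

section
/- Let T = P_1 P_2 ⋯ P_r be a tower in a finite group: each P_i is a p_i-group for a prime p_i, P_i normalizes P_j for i < j, and [P_i, P_{i-1}] = P_i for i = 2, ..., r. Then the Fitting height of T equals exactly r. -/
/-!
The series `1 = D₀ ≤ D₁ ≤ ⋯ ≤ D_r = T`, where `D_i` is generated by the last `i` groups of the
tower, is normal in `T` (earlier groups normalize later ones) and `D_{i+1}/D_i` is a quotient of
the `p`-group `P_{r-i}`, hence nilpotent; so the Fitting height is at most `r`. Conversely, since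
`P_{j+1} = [P_{j+1}, P_j]` lies in every term of the lower central series of any subgroup
containing `P_j` and `P_{j+1}`, each nilpotent layer of a series of `T` can only absorb the
bottom group of what remains of the tower; as all `P_j` are nontrivial, `r` layers are needed.
-/

/-- The lower central series of the subgroup `H`, computed inside the ambient
group: `relLCS H 0 = H`, `relLCS H (n+1) = ⁅relLCS H n, H⁆`.  For `K ≤ H` with
`K` normal, `H/K` is nilpotent iff `relLCS H c ≤ K` for some `c`. -/
def relLCS {G : Type} [Group G] (H : Subgroup G) : ℕ → Subgroup G
  | 0 => H
  | n + 1 => ⁅relLCS H n, H⁆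

/-- `G` has Fitting height at most `h`: there is a normal series of length `h`
with nilpotent quotients. -/
def FittingHeightLE (G : Type) [Group G] (h : ℕ) : Prop :=
  ∃ C : ℕ → Subgroup G, C 0 = ⊥ ∧ C h = ⊤ ∧
    ∀ i < h, (C i).Normal ∧ C i ≤ C (i + 1) ∧ ∃ c, relLCS (C (i + 1)) c ≤ C i

/-- The Fitting height of `G`: the least `h` with `F_h(G) = G`. -/
noncomputable def fittingHeight (G : Type) [Group G] : ℕ :=
  sInf {h | FittingHeightLE G h}


open Subgroup

section LowerCentralSeries

variable {G : Type*} [Group G]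

theorem Subgroup.le_lowerCentralSeries_of_commutator_eq {Q R H : Subgroup G} (hQ : Q ≤ H)
    (hR : R ≤ H) (hc : ⁅Q, R⁆ = Q) : ∀ n, Q ≤ H.lowerCentralSeries n
  | 0 => hQ
  | n + 1 => by
    rw [lowerCentralSeries_succ, ← hc]
    exact commutator_mono (le_lowerCentralSeries_of_commutator_eq hQ hR hc n) hR

theorem Subgroup.exists_lowerCentralSeries_le_of_isNilpotent {H N : Subgroup G}
    [(N.subgroupOf H).Normal] [Group.IsNilpotent (H ⧸ N.subgroupOf H)] :
    ∃ c, H.lowerCentralSeries c ≤ N := by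
  obtain ⟨c, hc⟩ := nilpotent_iff_lowerCentralSeries.mp ‹Group.IsNilpotent (H ⧸ N.subgroupOf H)›
  have hker : lowerCentralSeries (⊤ : Subgroup H) c ≤ N.subgroupOf H := by
    rw [← QuotientGroup.ker_mk' (N.subgroupOf H), ← map_eq_bot_iff, map_lowerCentralSeries,
      map_top_of_surjective _ (QuotientGroup.mk'_surjective _), hc]
  refine ⟨c, ?_⟩
  rw [← top_subtype_lowerCentralSeries]
  calc (lowerCentralSeries ⊤ c).map H.subtype ≤ (N.subgroupOf H).map H.subtype := map_mono hker
    _ = N ⊓ H := subgroupOf_map_subtype N H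
    _ ≤ N := inf_le_left

theorem IsPGroup.sup_quotient {p : ℕ} {Q N : Subgroup G} (hQ : IsPGroup p Q)
    (hLE : Q ≤ normalizer (N : Set G)) :
    letI := normal_subgroupOf_sup_of_le_normalizer hLE
    IsPGroup p ((Q ⊔ N : Subgroup G) ⧸ N.subgroupOf (Q ⊔ N)) :=
  letI := normal_subgroupOf_of_le_normalizer hLE
  letI := normal_subgroupOf_sup_of_le_normalizer hLE
  (hQ.to_quotient _).of_equiv (QuotientGroup.quotientInfEquivProdNormalizerQuotient Q N hLE)

theorem Subgroup.exists_lowerCentralSeries_sup_le_of_isPGroup [Finite G] {p : ℕ} (hp : p.Prime)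
    {Q N : Subgroup G} (hQ : IsPGroup p Q) (hLE : Q ≤ normalizer (N : Set G)) :
    ∃ c, (Q ⊔ N).lowerCentralSeries c ≤ N := by
  have : Fact p.Prime := ⟨hp⟩
  have := normal_subgroupOf_sup_of_le_normalizer hLE
  have := (hQ.sup_quotient hLE).isNilpotent
  exact exists_lowerCentralSeries_le_of_isNilpotent

end LowerCentralSeries

section FittingHeight

variable {G : Type} [Group G]

theorem relLCS_eq_lowerCentralSeries (H : Subgroup G) : ∀ n, relLCS H n = H.lowerCentralSeries n
  | 0 => rfl
  | n + 1 => by rw [relLCS, Subgroup.lowerCentralSeries_succ, relLCS_eq_lowerCentralSeries H n]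

theorem fittingHeight_eq {h : ℕ} (hle : FittingHeightLE G h)
    (hmin : ∀ k, FittingHeightLE G k → h ≤ k) : fittingHeight G = h :=
  le_antisymm (Nat.sInf_le hle) (le_csInf ⟨h, hle⟩ hmin)

theorem fittingHeightLE_of_series {T : Subgroup G} {h : ℕ} {C : ℕ → Subgroup G}
    (hmono : Monotone C) (h0 : C 0 = ⊥) (hh : C h = T)
    (hnorm : ∀ i < h, T ≤ normalizer (C i : Set G))
    (hstep : ∀ i < h, ∃ c, (C (i + 1)).lowerCentralSeries c ≤ C i) :
    FittingHeightLE T h := by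
  have hle : ∀ i ≤ h, C i ≤ T := fun i hi => hh ▸ hmono hi
  refine ⟨fun i => (C i).subgroupOf T, by simp [h0], by simp [hh], fun i hi =>
    ⟨normal_subgroupOf_of_le_normalizer (hnorm i hi), subgroupOf_mono T (hmono i.le_succ), ?_⟩⟩
  obtain ⟨c, hc⟩ := hstep i hi
  refine ⟨c, ?_⟩
  rw [relLCS_eq_lowerCentralSeries, ← map_le_map_iff_of_injective T.subtype_injective,
    map_lowerCentralSeries, subgroupOf_map_subtype, subgroupOf_map_subtype,
    inf_of_le_left (hle _ hi), inf_of_le_left (hle _ hi.le)]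
  exact hc

theorem FittingHeightLE.exists_series {T : Subgroup G} {h : ℕ} (hT : FittingHeightLE T h) :
    ∃ C : ℕ → Subgroup G, C 0 = ⊥ ∧ C h = T ∧
      ∀ i < h, ∃ c, (C (i + 1)).lowerCentralSeries c ≤ C i := by
  obtain ⟨C, h0, hh, hstep⟩ := hT
  refine ⟨fun i => (C i).map T.subtype, by simp [h0], by simp [hh, ← MonoidHom.range_eq_map],
    fun i hi => ?_⟩
  obtain ⟨-, -, c, hc⟩ := hstep i hi
  refine ⟨c, ?_⟩
  rw [← map_lowerCentralSeries, ← relLCS_eq_lowerCentralSeries]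
  exact map_mono hc

end FittingHeight

section Tower

variable {G : Type*} [Group G] {r : ℕ} (P : Fin r → Subgroup G)

theorem le_of_tower_le_series (hnontriv : ∀ i, P i ≠ ⊥)
    (hcomm : ∀ (i : Fin r) (h : (i : ℕ) + 1 < r),
      ⁅P ⟨(i : ℕ) + 1, h⟩, P i⁆ = P ⟨(i : ℕ) + 1, h⟩)
    {h : ℕ} {C : ℕ → Subgroup G} (h0 : C 0 = ⊥)
    (hstep : ∀ i < h, ∃ c, (C (i + 1)).lowerCentralSeries c ≤ C i) (hP : ∀ j, P j ≤ C h) :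
    r ≤ h := by
  have descend : ∀ k ≤ h, ∀ j (hj : j < r), k ≤ j → P ⟨j, hj⟩ ≤ C (h - k) := by
    intro k
    induction k with
    | zero => exact fun _ j hj _ => hP ⟨j, hj⟩
    | succ k ih =>
      rintro hk (_ | j) hj hkj
      · omega
      obtain ⟨c, hc⟩ := hstep (h - (k + 1)) (by omega)
      rw [show h - (k + 1) + 1 = h - k by omega] at hc
      exact (le_lowerCentralSeries_of_commutator_eq (ih (by omega) _ hj (by omega))
        (ih (by omega) j (by omega) (by omega)) (hcomm ⟨j, by omega⟩ hj) c).trans hc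
  by_contra! hlt
  exact hnontriv ⟨h, hlt⟩ (le_bot_iff.mp (by simpa [h0] using descend h le_rfl h hlt le_rfl))

/-- `towerTail P i` is generated by the last `i` members of the tower. -/
def towerTail (i : ℕ) : Subgroup G :=
  ⨆ j ∈ {j : Fin r | r ≤ (j : ℕ) + i}, P j

theorem towerTail_zero : towerTail P 0 = ⊥ :=
  le_bot_iff.mp <| iSup₂_le fun j hj => absurd (Set.mem_ofPred_eq ▸ hj) (by omega)

theorem towerTail_of_le {i : ℕ} (hi : r ≤ i) : towerTail P i = ⨆ j, P j := by
  have hall : {j : Fin r | r ≤ (j : ℕ) + i} = Set.univ :=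
    Set.eq_univ_of_forall fun j => show r ≤ (j : ℕ) + i by omega
  rw [towerTail, hall, iSup_univ]

theorem towerTail_monotone : Monotone (towerTail P) :=
  fun _ _ hik => biSup_mono fun _ hj => le_trans (Set.mem_ofPred_eq ▸ hj) (by omega)

theorem towerTail_succ {i : ℕ} (hi : i < r) :
    towerTail P (i + 1) = P ⟨r - 1 - i, by omega⟩ ⊔ towerTail P i := by
  have hinsert : {j : Fin r | r ≤ (j : ℕ) + (i + 1)} =
      insert ⟨r - 1 - i, by omega⟩ {j : Fin r | r ≤ (j : ℕ) + i} := by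
    ext j
    simp only [Set.mem_ofPred_eq, Set.mem_insert_iff, Fin.ext_iff]
    omega
  rw [towerTail, towerTail, hinsert, iSup_insert]

theorem iSup_le_normalizer_towerTail
    (hnorm : ∀ i j : Fin r, i < j → P i ≤ normalizer (P j : Set G)) (i : ℕ) :
    ⨆ j, P j ≤ normalizer (towerTail P i : Set G) := by
  refine iSup_le fun k => ?_
  by_cases hk : r ≤ (k : ℕ) + i
  · exact (le_biSup P (Set.mem_ofPred_eq ▸ hk)).trans le_normalizer
  calc P k ≤ ⨅ j, ⨅ (_ : j ∈ {j : Fin r | r ≤ (j : ℕ) + i}), normalizer (P j : Set G) :=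
        le_iInf₂ fun j hj => hnorm k j <| Fin.lt_def.mpr <| by
          simp only [Set.mem_ofPred_eq] at hj; omega
    _ ≤ ⨅ j, normalizer ((⨆ (_ : j ∈ {j : Fin r | r ≤ (j : ℕ) + i}), P j : Subgroup G) : Set G) :=
        iInf_mono fun j => iInf_normalizer_le_normalizer_iSup _
    _ ≤ normalizer (towerTail P i : Set G) := iInf_normalizer_le_normalizer_iSup _

end Tower

/-- The Fitting height of a tower `T = P_1 ⋯ P_r` (with `P_i` a nontrivial
`p_i`-group, `P_i` normalizing `P_j` for `i < j`, and `[P_i, P_{i-1}] = P_i`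
for `i = 2, ..., r`) equals exactly `r`. -/
theorem stmt6 (G : Type) [Group G] [Finite G] (r : ℕ)
    (p : Fin r → ℕ) (P : Fin r → Subgroup G)
    (hprime : ∀ i, (p i).Prime)
    (hpgroup : ∀ i, IsPGroup (p i) (P i))
    (hnontriv : ∀ i, P i ≠ ⊥)
    (hnorm : ∀ i j : Fin r, i < j → P i ≤ Subgroup.normalizer (P j : Set G))
    (hcomm : ∀ (i : Fin r) (h : (i : ℕ) + 1 < r),
      ⁅P ⟨(i : ℕ) + 1, h⟩, P i⁆ = P ⟨(i : ℕ) + 1, h⟩) :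
    fittingHeight ↥(⨆ i, P i) = r := by
  have hnormTail := iSup_le_normalizer_towerTail P hnorm
  have upper : FittingHeightLE ↥(⨆ i, P i) r := by
    refine fittingHeightLE_of_series (towerTail_monotone P) (towerTail_zero P)
      (towerTail_of_le P le_rfl) (fun i _ => hnormTail i) fun i hi => ?_
    rw [towerTail_succ P hi]
    exact exists_lowerCentralSeries_sup_le_of_isPGroup (hprime _) (hpgroup _)
      ((le_iSup P _).trans (hnormTail i))
  have lower (h : ℕ) (hT : FittingHeightLE ↥(⨆ i, P i) h) : r ≤ h := by
    obtain ⟨C, h0, hh, hstep⟩ := hT.exists_series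
    exact le_of_tower_le_series P hnontriv hcomm h0 hstep fun j => hh ▸ le_iSup P j
  exact fittingHeight_eq upper lower
end

section
/- In a tower T = P_1 ⋯ P_r of a finite group (with P_i a p_i-group, P_i normalizing P_j for i < j, and [P_i, P_{i-1}] = P_i for i ≥ 2), the product P_2 ⋯ P_r is contained in the nilpotent residual γ_∞(T). -/
/-!
Each `P_i` with `i ≥ 2` reproduces itself under commutation with `T`:
`P_i = [P_i, P_{i-1}] ≤ [P_i, T]`. A subgroup `H ≤ T` with `H ≤ [H, T]` lies in every term
of the lower central series of `T`, by induction on the term.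
-/

namespace Subgroup

variable {G : Type*} [Group G]

theorem le_lowerCentralSeries_of_le_commutator {H S : Subgroup G} (hHS : H ≤ S)
    (hH : H ≤ ⁅H, S⁆) : ∀ n, H ≤ S.lowerCentralSeries n
  | 0 => hHS
  | n + 1 => hH.trans (commutator_mono (le_lowerCentralSeries_of_le_commutator hHS hH n) le_rfl)

theorem le_map_iInf_lowerCentralSeries_of_le_commutator {H S : Subgroup G} (hHS : H ≤ S)
    (hH : H ≤ ⁅H, S⁆) :
    H ≤ (⨅ n, lowerCentralSeries (⊤ : Subgroup S) n).map S.subtype := by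
  rw [map_iInf _ S.subtype_injective]
  simp_rw [top_subtype_lowerCentralSeries]
  exact le_iInf (le_lowerCentralSeries_of_le_commutator hHS hH)

end Subgroup

theorem stmt7_general (G : Type) [Group G] (r : ℕ)
    (P : Fin r → Subgroup G)
    (hcomm : ∀ (i : Fin r) (h : (i : ℕ) + 1 < r),
      ⁅P ⟨(i : ℕ) + 1, h⟩, P i⁆ = P ⟨(i : ℕ) + 1, h⟩) :
    ∀ i : Fin r, 0 < (i : ℕ) →
      P i ≤ Subgroup.map (⨆ j, P j).subtype
        (⨅ n, Subgroup.lowerCentralSeries (⊤ : Subgroup ↥(⨆ j, P j)) n) := by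
  intro i hi
  have hpred : (⟨(i : ℕ) - 1 + 1, by omega⟩ : Fin r) = i := Fin.ext (by simp only; omega)
  have hself : ⁅P i, P ⟨(i : ℕ) - 1, by omega⟩⁆ = P i := by
    simpa only [hpred] using hcomm ⟨(i : ℕ) - 1, by omega⟩ (by simp only; omega)
  refine Subgroup.le_map_iInf_lowerCentralSeries_of_le_commutator (le_iSup P i) ?_
  calc P i = ⁅P i, P ⟨(i : ℕ) - 1, by omega⟩⁆ := hself.symm
    _ ≤ ⁅P i, ⨆ j, P j⁆ := Subgroup.commutator_mono le_rfl (le_iSup P _)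

/-- In a tower `T = P_1 ⋯ P_r` of a finite group (`P_i` a `p_i`-group, `P_i`
normalizing `P_j` for `i < j`, and `[P_i, P_{i-1}] = P_i` for `i ≥ 2`), the
product `P_2 ⋯ P_r` is contained in the nilpotent residual
`γ_∞(T) = ⋂ n, γ_n(T)` of `T = ⟨P_1, ..., P_r⟩`. -/
theorem stmt7 (G : Type) [Group G] [Finite G] (r : ℕ)
    (p : Fin r → ℕ) (P : Fin r → Subgroup G)
    (hprime : ∀ i, (p i).Prime)
    (hpgroup : ∀ i, IsPGroup (p i) (P i))
    (hnorm : ∀ i j : Fin r, i < j → P i ≤ Subgroup.normalizer (P j : Set G))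
    (hcomm : ∀ (i : Fin r) (h : (i : ℕ) + 1 < r),
      ⁅P ⟨(i : ℕ) + 1, h⟩, P i⁆ = P ⟨(i : ℕ) + 1, h⟩) :
    ∀ i : Fin r, 0 < (i : ℕ) →
      P i ≤ Subgroup.map (⨆ j, P j).subtype
        (⨅ n, Subgroup.lowerCentralSeries (⊤ : Subgroup ↥(⨆ j, P j)) n) :=
  stmt7_general G r P hcomm
end

section
/- Let G be a finite group, w a word, e a positive integer such that every w-value in G has order dividing e. Define w_e as the product of e disjoint copies of w (so w_e-values are products of e w-values). If N is a normal subgroup of G containing no nontrivial w_e-values of G, then [N, w(G)] = 1, i.e., N centralizes the verbal subgroup w(G). -/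
/-!
If `y` is a `w`-value and `x ∈ N`, then `y⁻¹ * (x * y * x⁻¹)` lies in `N` by normality, and it is
a `w_e`-value because `y⁻¹ = y ^ (e - 1)` and the conjugate `x * y * x⁻¹` is again a `w`-value.
Hence it is trivial, i.e. `x` commutes with every `w`-value, so `N` centralizes `w(G)`.
-/

/-- The set of `w`-values in `G`: images of the word `w` (an element of the
free group on countably many variables) under all homomorphisms to `G`. -/
def wValues (w : FreeGroup ℕ) (G : Type) [Group G] : Set G :=
  {g | ∃ φ : FreeGroup ℕ →* G, φ w = g}

/-- `w_j`-values: products of `j` `w`-values of `G`. -/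
def wProdValues (w : FreeGroup ℕ) (G : Type) [Group G] (j : ℕ) : Set G :=
  {g | ∃ l : List G, l.length = j ∧ (∀ x ∈ l, x ∈ wValues w G) ∧ l.prod = g}

section WordValues

variable {w : FreeGroup ℕ} {G : Type} [Group G]

theorem map_mem_wValues {H : Type} [Group H] (f : G →* H) {y : G} (hy : y ∈ wValues w G) :
    f y ∈ wValues w H := by
  obtain ⟨φ, rfl⟩ := hy
  exact ⟨f.comp φ, rfl⟩

theorem conj_mem_wValues (x : G) {y : G} (hy : y ∈ wValues w G) :
    x * y * x⁻¹ ∈ wValues w G :=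
  map_mem_wValues (MulAut.conj x).toMonoidHom hy

theorem pow_mul_mem_wProdValues {y z : G} (hy : y ∈ wValues w G) (hz : z ∈ wValues w G)
    (j : ℕ) : y ^ j * z ∈ wProdValues w G (j + 1) := by
  refine ⟨List.replicate j y ++ [z], by simp, ?_, by simp [List.prod_replicate]⟩
  intro u hu
  rcases List.mem_append.1 hu with hu | hu
  · rwa [List.eq_of_mem_replicate hu]
  · rwa [List.mem_singleton.1 hu]

theorem inv_mul_mem_wProdValues {e : ℕ} (he : 0 < e) {y z : G} (hy : y ∈ wValues w G)
    (hye : y ^ e = 1) (hz : z ∈ wValues w G) : y⁻¹ * z ∈ wProdValues w G e := by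
  have hyinv : y ^ (e - 1) = y⁻¹ :=
    eq_inv_of_mul_eq_one_left (by rw [← pow_succ, Nat.sub_add_cancel he, hye])
  simpa [hyinv, Nat.sub_add_cancel he] using pow_mul_mem_wProdValues hy hz (e - 1)

theorem commute_of_mem_of_mem_wValues {e : ℕ} (he : 0 < e)
    (horder : ∀ y ∈ wValues w G, y ^ e = 1) {N : Subgroup G} (hN : N.Normal)
    (hno : ∀ g ∈ wProdValues w G e, g ∈ N → g = 1) {x y : G} (hx : x ∈ N)
    (hy : y ∈ wValues w G) : Commute x y := by
  have hmem : y⁻¹ * (x * y * x⁻¹) ∈ N := by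
    have := N.mul_mem (hN.conj_mem x hx y⁻¹) (N.inv_mem hx)
    simpa only [inv_inv, mul_assoc] using this
  have hconj : y = x * y * x⁻¹ :=
    inv_mul_eq_one.1 (hno _ (inv_mul_mem_wProdValues he hy (horder y hy)
      (conj_mem_wValues x hy)) hmem)
  exact (eq_mul_inv_iff_mul_eq.1 hconj).symm

end WordValues

theorem stmt10_general (G : Type) [Group G] (w : FreeGroup ℕ) (e : ℕ)
    (he : 0 < e)
    (horder : ∀ y ∈ wValues w G, y ^ e = 1)
    (N : Subgroup G) (hN : N.Normal)
    (hno : ∀ g ∈ wProdValues w G e, g ∈ N → g = 1) :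
    ⁅N, Subgroup.closure (wValues w G)⁆ = ⊥ := by
  rw [Subgroup.commutator_comm, Subgroup.commutator_eq_bot_iff_le_centralizer,
    Subgroup.closure_le]
  intro y hy
  rw [SetLike.mem_coe, Subgroup.mem_centralizer_iff]
  intro x hx
  exact commute_of_mem_of_mem_wValues he horder hN hno hx hy

/-- Let `G` be a finite group, `w` a word all of whose values in `G` have
order dividing `e > 0`.  If `N` is a normal subgroup of `G` containing no
nontrivial `w_e`-values of `G`, then `[N, w(G)] = 1`. -/
theorem stmt10 (G : Type) [Group G] [Finite G] (w : FreeGroup ℕ) (e : ℕ)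
    (he : 0 < e)
    (horder : ∀ y ∈ wValues w G, y ^ e = 1)
    (N : Subgroup G) (hN : N.Normal)
    (hno : ∀ g ∈ wProdValues w G e, g ∈ N → g = 1) :
    ⁅N, Subgroup.closure (wValues w G)⁆ = ⊥ :=
  stmt10_general G w e he horder N hN hno
end
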